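/- arXiv:2508.15666 — 2 statements merged into one kernel-verified Lean document; each statement's English description precedes it below -/
import Mathlib

section
/- Let T be a finite tree on vertex set {0, 1, …, n} with n ≥ 1, and let d_k = deg(k) be the degree of vertex k. Then the number of labelled trees on {0, …, n} with prescribed degree sequence (d_0, …, d_n) equals (n−1)! / ∏_{k=0}^n (d_k − 1)!. -/
open Finset



variable {V : Type*} {G : SimpleGraph V}

lemma fstedge_mem {v w : V} (p : G.Walk v w) (hp : ¬ p.Nil) :
    s(v, p.getVert 1) ∈ p.edges := by
  cases p with
  | nil => simp at hp
  | cons h q => simp [SimpleGraph.Walk.getVert_cons_succ]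

lemma adj_revGetVert {v w : V} (p : G.Walk v w) (hp : ¬ p.Nil) :
    G.Adj w (p.reverse.getVert 1) := by
  apply SimpleGraph.Walk.adj_snd
  rwa [SimpleGraph.Walk.nil_iff_length_eq, SimpleGraph.Walk.length_reverse,
    ← SimpleGraph.Walk.nil_iff_length_eq]

lemma twoNbrs_of_cycle_start {u : V} (c : G.Walk u u) (hc : c.IsCycle) :
    ∃ x y, x ≠ y ∧ G.Adj u x ∧ G.Adj u y := by
  have hlen : 3 ≤ c.length := hc.three_le_length
  have hnil : ¬ c.Nil := by rw [SimpleGraph.Walk.nil_iff_length_eq]; omega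
  refine ⟨c.getVert 1, c.reverse.getVert 1, ?_, c.adj_snd hnil, adj_revGetVert c hnil⟩
  intro hxy
  cases c with
  | nil => simp at hnil
  | cons h q =>
    rw [SimpleGraph.Walk.cons_isCycle_iff] at hc
    apply hc.2
    have h1 : (SimpleGraph.Walk.cons h q).getVert 1 = q.getVert 0 :=
      SimpleGraph.Walk.getVert_cons_succ q h
    rw [SimpleGraph.Walk.getVert_zero] at h1
    have hql : 2 ≤ q.length := by
      simp only [SimpleGraph.Walk.length_cons] at hlen; omega
    have hqrnil : ¬ q.reverse.Nil := by
      rw [SimpleGraph.Walk.nil_iff_length_eq, SimpleGraph.Walk.length_reverse]; omega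
    have h2 : (SimpleGraph.Walk.cons h q).reverse.getVert 1 = q.reverse.getVert 1 := by
      rw [SimpleGraph.Walk.getVert_reverse, SimpleGraph.Walk.getVert_reverse,
        SimpleGraph.Walk.length_cons]
      have h3 : q.length + 1 - 1 = (q.length - 1) + 1 := by omega
      rw [h3, SimpleGraph.Walk.getVert_cons_succ]
    have hmem := fstedge_mem q.reverse hqrnil
    rw [SimpleGraph.Walk.edges_reverse, List.mem_reverse] at hmem
    have h4 : s(u, q.reverse.getVert 1) ∈ q.edges := hmem
    rw [← h2, ← hxy, h1] at h4
    exact h4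

lemma twoNbrs_of_cycle {v u : V} (c : G.Walk v v) (hc : c.IsCycle) (hu : u ∈ c.support) :
    ∃ x y, x ≠ y ∧ G.Adj u x ∧ G.Adj u y := by
  haveI := Classical.decEq V
  exact twoNbrs_of_cycle_start (c.rotate u hu) (hc.rotate hu)

/-- an interior vertex of a path has two distinct neighbors -/
lemma twoNbrs_of_path {a b u : V} (p : G.Walk a b) (hp : p.IsPath) (hu : u ∈ p.support)
    (hua : u ≠ a) (hub : u ≠ b) : ∃ x y, x ≠ y ∧ G.Adj u x ∧ G.Adj u y := by
  induction p with
  | nil => simp at hu; exact absurd hu hua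
  | @cons a c b h q ih =>
    rw [SimpleGraph.Walk.support_cons, List.mem_cons] at hu
    rcases hu with rfl | hu
    · exact absurd rfl hua
    rw [SimpleGraph.Walk.cons_isPath_iff] at hp
    by_cases huc : u = c
    · subst huc
      -- neighbors: a and second vertex of q
      have hqnil : ¬ q.Nil := SimpleGraph.Walk.not_nil_of_ne hub
      refine ⟨a, q.getVert 1, ?_, h.symm, q.adj_snd hqnil⟩
      intro hay
      apply hp.2
      rw [hay]
      exact SimpleGraph.Walk.snd_mem_support_of_mem_edges q (fstedge_mem q hqnil)
    · exact ih hp.1 hu huc hub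

section MapDescent
variable {W : Type*}

/-- the homomorphism from `G` to `G.map f` -/
def mapHom (f : V ↪ W) (G : SimpleGraph V) : G →g G.map f :=
  ⟨f, fun h => SimpleGraph.map_adj_apply.mpr h⟩

@[simp] lemma mapHom_apply (f : V ↪ W) (G : SimpleGraph V) (v : V) : mapHom f G v = f v := rfl

lemma exists_walk_of_map {f : V ↪ W} : ∀ {x y : W} (q : (G.map f).Walk x y) {a b : V}
    (ha : f a = x) (hb : f b = y), ∃ p : G.Walk a b,
      p.map (mapHom f G) = q.copy ha.symm hb.symm := by
  intro x y q
  induction q with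
  | nil =>
    intro a b ha hb
    subst ha
    have hab : a = b := (f.injective hb).symm
    subst hab
    exact ⟨SimpleGraph.Walk.nil, by simp⟩
  | @cons x c y h q ih =>
    intro a b ha hb
    subst ha
    rw [SimpleGraph.map_adj] at h
    obtain ⟨a', b', hadj, ha', hb'⟩ := h
    have haa : a' = a := f.injective ha'
    subst haa
    subst hb'
    obtain ⟨p', hp'⟩ := ih rfl hb
    refine ⟨SimpleGraph.Walk.cons hadj p', ?_⟩
    rw [SimpleGraph.Walk.map_cons, SimpleGraph.Walk.copy_cons, hp']
    rfl

lemma isAcyclic_map (f : V ↪ W) (hG : G.IsAcyclic) : (G.map f).IsAcyclic := by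
  intro w c hc
  have hnil : ¬ c.Nil := hc.not_nil
  have hadj := c.adj_snd hnil
  rw [SimpleGraph.map_adj] at hadj
  obtain ⟨a, b', -, ha, -⟩ := hadj
  obtain ⟨p, hp⟩ := exists_walk_of_map c ha ha
  have hinj : Function.Injective ⇑(mapHom f G) := f.injective
  have hcyc : (p.map (mapHom f G)).IsCycle := by
    rw [hp]; exact (SimpleGraph.Walk.isCycle_copy _ _).mpr hc
  rw [SimpleGraph.Walk.map_isCycle_iff_of_injective hinj] at hcyc
  exact hG p hcyc

lemma isAcyclic_comap (f : V ↪ W) {G' : SimpleGraph W} (h : G'.IsAcyclic) :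
    (G'.comap ⇑f).IsAcyclic := by
  intro v c hc
  have hinj : Function.Injective ⇑(SimpleGraph.Embedding.comap f G').toHom := f.injective
  exact h (c.map (SimpleGraph.Embedding.comap f G').toHom) (hc.map hinj)

end MapDescent

section Extend

variable {m : ℕ}

/-- induced subgraph on the first `m` vertices -/
def restrictG (G : SimpleGraph (Fin (m+1))) : SimpleGraph (Fin m) :=
  G.comap ⇑(Fin.castSuccEmb : Fin m ↪ Fin (m+1))

/-- add a pendant vertex `last` attached to `j` -/
def extendG (H : SimpleGraph (Fin m)) (j : Fin m) : SimpleGraph (Fin (m+1)) :=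
  H.map Fin.castSuccEmb ⊔ SimpleGraph.edge (Fin.last m) j.castSucc

lemma restrictG_adj {G : SimpleGraph (Fin (m+1))} {a b : Fin m} :
    (restrictG G).Adj a b ↔ G.Adj a.castSucc b.castSucc := by
  simp only [restrictG, SimpleGraph.comap_adj, Fin.coe_castSuccEmb]

lemma extendG_adj {H : SimpleGraph (Fin m)} {j : Fin m} {x y : Fin (m+1)} :
    (extendG H j).Adj x y ↔ (∃ a b, H.Adj a b ∧ a.castSucc = x ∧ b.castSucc = y) ∨
      ((x = Fin.last m ∧ y = j.castSucc) ∨ (x = j.castSucc ∧ y = Fin.last m)) := by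
  have hne : Fin.last m ≠ j.castSucc := (Fin.castSucc_lt_last j).ne'
  simp only [extendG, SimpleGraph.sup_adj, SimpleGraph.map_adj, SimpleGraph.edge_adj,
    Fin.castSuccEmb, Function.Embedding.coeFn_mk]
  constructor
  · rintro (h | ⟨h, -⟩)
    · exact Or.inl h
    · exact Or.inr h
  · rintro (h | h)
    · exact Or.inl h
    · refine Or.inr ⟨h, ?_⟩
      rcases h with ⟨rfl, rfl⟩ | ⟨rfl, rfl⟩
      · exact hne
      · exact hne.symm

lemma extendG_nbr_last {H : SimpleGraph (Fin m)} {j : Fin m} :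
    (extendG H j).neighborSet (Fin.last m) = {j.castSucc} := by
  ext y
  simp only [SimpleGraph.mem_neighborSet, extendG_adj, Set.mem_singleton_iff]
  constructor
  · rintro (⟨a, b, -, ha, -⟩ | ⟨-, rfl⟩ | ⟨h, -⟩)
    · exact absurd ha (Fin.castSucc_lt_last a).ne
    · rfl
    · exact absurd h.symm (Fin.castSucc_lt_last j).ne
  · rintro rfl
    exact Or.inr (Or.inl ⟨trivial, rfl⟩)

lemma extendG_nbr_castSucc {H : SimpleGraph (Fin m)} {j k : Fin m} :
    (extendG H j).neighborSet k.castSucc =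
      Fin.castSucc '' (H.neighborSet k) ∪ (if k = j then {Fin.last m} else ∅) := by
  ext y
  simp only [SimpleGraph.mem_neighborSet, extendG_adj, Set.mem_union, Set.mem_image]
  constructor
  · rintro (⟨a, b, hab, ha, hb⟩ | ⟨h, -⟩ | ⟨h, rfl⟩)
    · have : a = k := Fin.castSucc_injective _ ha
      subst this
      exact Or.inl ⟨b, hab, hb⟩
    · exact absurd h (Fin.castSucc_lt_last k).ne
    · have : k = j := Fin.castSucc_injective _ h
      subst this
      simp
  · rintro (⟨b, hab, hb⟩ | h)
    · exact Or.inl ⟨k, b, hab, rfl, hb⟩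
    · by_cases hkj : k = j
      · simp only [hkj, if_pos rfl, Set.mem_singleton_iff] at h
        subst h hkj
        exact Or.inr (Or.inr ⟨rfl, rfl⟩)
      · simp [hkj] at h

lemma restrictG_extendG {H : SimpleGraph (Fin m)} {j : Fin m} :
    restrictG (extendG H j) = H := by
  ext a b
  rw [restrictG_adj, extendG_adj]
  constructor
  · rintro (⟨a', b', hab, ha, hb⟩ | ⟨h, -⟩ | ⟨-, h⟩)
    · rwa [Fin.castSucc_injective _ ha, Fin.castSucc_injective _ hb] at hab
    · exact absurd h (Fin.castSucc_lt_last a).ne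
    · exact absurd h (Fin.castSucc_lt_last b).ne
  · intro h
    exact Or.inl ⟨a, b, h, rfl, rfl⟩

lemma extendG_restrictG {G : SimpleGraph (Fin (m+1))} {j : Fin m}
    (hnb : G.neighborSet (Fin.last m) = {j.castSucc}) :
    extendG (restrictG G) j = G := by
  ext x y
  rw [extendG_adj]
  constructor
  · rintro (⟨a, b, hab, rfl, rfl⟩ | ⟨rfl, rfl⟩ | ⟨rfl, rfl⟩)
    · rwa [restrictG_adj] at hab
    · have : j.castSucc ∈ G.neighborSet (Fin.last m) := by rw [hnb]; rfl
      exact this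
    · have : j.castSucc ∈ G.neighborSet (Fin.last m) := by rw [hnb]; rfl
      exact this.symm
  · intro h
    by_cases hx : x = Fin.last m
    · subst hx
      have : y ∈ G.neighborSet (Fin.last m) := h
      rw [hnb] at this
      exact Or.inr (Or.inl ⟨rfl, this⟩)
    · by_cases hy : y = Fin.last m
      · subst hy
        have : x ∈ G.neighborSet (Fin.last m) := h.symm
        rw [hnb] at this
        exact Or.inr (Or.inr ⟨this, rfl⟩)
      · obtain ⟨a, rfl⟩ := Fin.exists_castSucc_eq.mpr hx
        obtain ⟨b, rfl⟩ := Fin.exists_castSucc_eq.mpr hy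
        exact Or.inl ⟨a, b, restrictG_adj.mpr h, rfl, rfl⟩

end Extend

section Trees

variable {m : ℕ}

lemma extendG_connected {H : SimpleGraph (Fin m)} {j : Fin m} (hH : H.Connected) :
    (extendG H j).Connected := by
  rw [SimpleGraph.connected_iff_exists_forall_reachable]
  refine ⟨j.castSucc, ?_⟩
  intro w
  induction w using Fin.lastCases with
  | last =>
    have : (extendG H j).Adj j.castSucc (Fin.last m) :=
      extendG_adj.mpr (Or.inr (Or.inr ⟨rfl, rfl⟩))
    exact this.reachable
  | cast k =>
    have r : H.Reachable j k := hH.preconnected j k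
    exact r.map ((SimpleGraph.Hom.ofLE (le_sup_left)).comp (mapHom Fin.castSuccEmb H))

lemma walk_avoid {G : SimpleGraph (Fin (m+1))} : ∀ {x y : Fin (m+1)} (p : G.Walk x y),
    Fin.last m ∉ p.support → ∀ a b : Fin m, a.castSucc = x → b.castSucc = y →
    (restrictG G).Reachable a b := by
  intro x y p
  induction p with
  | nil =>
    intro h a b ha hb
    have : a = b := Fin.castSucc_injective _ (ha.trans hb.symm)
    subst this
    rfl
  | @cons x c y h q ih =>
    intro hsupp a b ha hb
    rw [SimpleGraph.Walk.support_cons, List.mem_cons] at hsupp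
    push_neg at hsupp
    have hc : c ≠ Fin.last m := by
      intro hc
      exact hsupp.2 (hc ▸ q.start_mem_support)
    obtain ⟨c', hc'⟩ := Fin.exists_castSucc_eq.mpr hc
    have hadj : (restrictG G).Adj a c' := by
      rw [restrictG_adj, ha, hc']
      exact h
    exact hadj.reachable.trans (ih hsupp.2 c' b hc' hb)

lemma restrictG_connected {G : SimpleGraph (Fin (m+1))} (hm : 0 < m) (hG : G.IsTree)
    (hdeg : (G.neighborSet (Fin.last m)).ncard = 1) : (restrictG G).Connected := by
  haveI : Nonempty (Fin m) := ⟨⟨0, hm⟩⟩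
  rw [SimpleGraph.connected_iff]
  refine ⟨fun a b => ?_, inferInstance⟩
  have r : G.Reachable a.castSucc b.castSucc := hG.isConnected.preconnected _ _
  obtain ⟨w⟩ := r
  let p := w.toPath
  have hp : (p : G.Walk a.castSucc b.castSucc).IsPath := p.isPath
  have hlast : Fin.last m ∉ (p : G.Walk a.castSucc b.castSucc).support := by
    intro hmem
    obtain ⟨x, y, hxy, hx, hy⟩ := twoNbrs_of_path _ hp hmem
      (Fin.castSucc_lt_last a).ne' (Fin.castSucc_lt_last b).ne'
    obtain ⟨z, hz⟩ := Set.ncard_eq_one.mp hdeg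
    have hxz : x = z := by have : x ∈ G.neighborSet (Fin.last m) := hx; rwa [hz] at this
    have hyz : y = z := by have : y ∈ G.neighborSet (Fin.last m) := hy; rwa [hz] at this
    exact hxy (hxz.trans hyz.symm)
  exact walk_avoid _ hlast a b rfl rfl

lemma extendG_isTree {H : SimpleGraph (Fin m)} {j : Fin m} (hH : H.IsTree) :
    (extendG H j).IsTree := by
  refine ⟨extendG_connected hH.isConnected, ?_⟩
  intro w c hc
  by_cases hmem : Fin.last m ∈ c.support
  · obtain ⟨x, y, hxy, hx, hy⟩ := twoNbrs_of_cycle c hc hmem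
    have hx' : x ∈ (extendG H j).neighborSet (Fin.last m) := hx
    have hy' : y ∈ (extendG H j).neighborSet (Fin.last m) := hy
    rw [extendG_nbr_last] at hx' hy'
    exact hxy (hx'.trans hy'.symm)
  · have hsub : ∀ e ∈ c.edges, e ∈ (H.map Fin.castSuccEmb).edgeSet := by
      intro e he
      have := c.edges_subset_edgeSet he
      rw [extendG, SimpleGraph.edgeSet_sup] at this
      rcases this with h | h
      · exact h
      · rw [SimpleGraph.edge_edgeSet_of_ne (Fin.castSucc_lt_last j).ne'] at h
        rw [Set.mem_singleton_iff] at h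
        subst h
        exact absurd (SimpleGraph.Walk.fst_mem_support_of_mem_edges c he) hmem
    have hc' := hc.transfer hsub
    exact isAcyclic_map Fin.castSuccEmb ((SimpleGraph.isTree_iff _).mp hH).2 _ hc'

lemma restrictG_isTree {G : SimpleGraph (Fin (m+1))} (hm : 0 < m) (hG : G.IsTree)
    (hdeg : (G.neighborSet (Fin.last m)).ncard = 1) : (restrictG G).IsTree :=
  ⟨restrictG_connected hm hG hdeg,
    isAcyclic_comap Fin.castSuccEmb ((SimpleGraph.isTree_iff _).mp hG).2⟩

lemma extendG_ncard_last {H : SimpleGraph (Fin m)} {j : Fin m} :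
    ((extendG H j).neighborSet (Fin.last m)).ncard = 1 := by
  rw [extendG_nbr_last, Set.ncard_singleton]

lemma extendG_ncard_castSucc {H : SimpleGraph (Fin m)} {j k : Fin m} :
    ((extendG H j).neighborSet k.castSucc).ncard =
      (H.neighborSet k).ncard + (if k = j then 1 else 0) := by
  rw [extendG_nbr_castSucc]
  by_cases hkj : k = j
  · rw [if_pos hkj, if_pos hkj, Set.ncard_union_eq ?_ (Set.toFinite _) (Set.toFinite _),
      Set.ncard_singleton, Set.ncard_image_of_injective _ (Fin.castSucc_injective m)]
    rw [Set.disjoint_singleton_right]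
    rintro ⟨a, -, ha⟩
    exact (Fin.castSucc_lt_last a).ne ha
  · rw [if_neg hkj, if_neg hkj, Set.union_empty,
      Set.ncard_image_of_injective _ (Fin.castSucc_injective m), Nat.add_zero]

end Trees

section Count

/-- the set of labelled trees with given degree sequence -/
abbrev TT (m : ℕ) (d : Fin m → ℕ) :=
  {G : SimpleGraph (Fin m) // G.IsTree ∧ ∀ k, (G.neighborSet k).ncard = d k}

lemma isAcyclic_iso {α β : Type*} {A : SimpleGraph α} {B : SimpleGraph β} (φ : A ≃g B)
    (hB : B.IsAcyclic) : A.IsAcyclic := by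
  intro v c hc
  exact hB (c.map φ.toHom) (hc.map φ.toEquiv.injective)

lemma relabel_card (m : ℕ) (d : Fin m → ℕ) (e : Fin m ≃ Fin m) :
    Nat.card (TT m d) = Nat.card (TT m (d ∘ e)) := by
  apply Nat.card_congr
  have prop : ∀ (d : Fin m → ℕ) (e : Fin m ≃ Fin m) (G : SimpleGraph (Fin m)),
      (G.IsTree ∧ ∀ k, (G.neighborSet k).ncard = d k) →
      ((G.comap ⇑e.toEmbedding).IsTree ∧
        ∀ k, ((G.comap ⇑e.toEmbedding).neighborSet k).ncard = (d ∘ e) k) := by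
    intro d e G ⟨hT, hdeg⟩
    constructor
    · refine ⟨((SimpleGraph.Iso.comap e G).connected_iff).mpr hT.isConnected, ?_⟩
      exact isAcyclic_iso (SimpleGraph.Iso.comap e G) ((SimpleGraph.isTree_iff _).mp hT).2
    · intro k
      have := Nat.card_congr ((SimpleGraph.Iso.comap e G).mapNeighborSet k)
      rw [Nat.card_coe_set_eq, Nat.card_coe_set_eq] at this
      refine this.trans ?_
      exact hdeg (e k)
  refine ⟨fun ⟨G, h⟩ => ⟨G.comap ⇑e.toEmbedding, prop d e G h⟩,
    fun ⟨G, h⟩ => ⟨G.comap ⇑e.symm.toEmbedding, ?_⟩, ?_, ?_⟩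
  · have := prop (d ∘ ⇑e) e.symm G h
    refine ⟨this.1, fun k => ?_⟩
    rw [this.2 k]
    simp
  · rintro ⟨G, h⟩
    apply Subtype.ext
    show (G.comap ⇑e.toEmbedding).comap ⇑e.symm.toEmbedding = G
    rw [SimpleGraph.comap_comap]
    convert SimpleGraph.comap_id
    ext x
    simp
  · rintro ⟨G, h⟩
    apply Subtype.ext
    show (G.comap ⇑e.symm.toEmbedding).comap ⇑e.toEmbedding = G
    rw [SimpleGraph.comap_comap]
    convert SimpleGraph.comap_id
    ext x
    simp

lemma tree_ncard_pos {m : ℕ} (hm : 2 ≤ m) {H : SimpleGraph (Fin m)} (hH : H.IsTree)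
    (k : Fin m) : 1 ≤ (H.neighborSet k).ncard := by
  have hne : (H.neighborSet k).Nonempty := by
    haveI : Nontrivial (Fin m) := by
      apply Fin.nontrivial_iff_two_le.mpr hm
    obtain ⟨w, hw⟩ := exists_ne k
    obtain ⟨p⟩ := (hH.isConnected.preconnected k w).symm.symm
    have hnil : ¬ p.Nil := SimpleGraph.Walk.not_nil_of_ne hw.symm
    exact ⟨p.getVert 1, p.adj_snd hnil⟩
  exact (Set.ncard_pos (Set.toFinite _)).mpr hne

end Count
section Count2

lemma decomp_card (m : ℕ) (hm : 0 < m) (d : Fin (m+1) → ℕ) (hd1 : ∀ k, 1 ≤ d k)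
    (hlast : d (Fin.last m) = 1) :
    Nat.card (TT (m+1) d) =
      ∑ j : Fin m, Nat.card (TT m (fun k => if k = j then d k.castSucc - 1
        else d k.castSucc)) := by
  classical
  set d' : Fin m → Fin m → ℕ :=
    fun j k => if k = j then d k.castSucc - 1 else d k.castSucc with hd'
  have hΦprop : ∀ (x : Σ j : Fin m, TT m (d' j)),
      (extendG x.2.1 x.1).IsTree ∧
        ∀ k, ((extendG x.2.1 x.1).neighborSet k).ncard = d k := by
    rintro ⟨j, H, hHT, hHdeg⟩
    refine ⟨extendG_isTree hHT, ?_⟩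
    intro k
    induction k using Fin.lastCases with
    | last => rw [extendG_ncard_last, hlast]
    | cast k' =>
      rw [extendG_ncard_castSucc, hHdeg k']
      by_cases hkj : k' = j
      · have := hd1 k'.castSucc
        simp only [hd', if_pos hkj]
        omega
      · simp [hd', hkj]
  let Φ : (Σ j : Fin m, TT m (d' j)) → TT (m+1) d :=
    fun x => ⟨extendG x.2.1 x.1, hΦprop x⟩
  have hbij : Function.Bijective Φ := by
    constructor
    · rintro ⟨j, H, hH⟩ ⟨j', H', hH'⟩ heq
      have hE : extendG H j = extendG H' j' := congrArg Subtype.val heq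
      have hj : j = j' := by
        have h1 : ({j.castSucc} : Set (Fin (m+1))) = {j'.castSucc} := by
          rw [← extendG_nbr_last (H := H), ← extendG_nbr_last (H := H'), hE]
        have := Set.singleton_eq_singleton_iff.mp h1
        exact Fin.castSucc_injective _ this
      subst hj
      have hHH : H = H' := by
        rw [← restrictG_extendG (H := H) (j := j), ← restrictG_extendG (H := H') (j := j), hE]
      subst hHH
      rfl
    · rintro ⟨G, hT, hdeg⟩
      have h1 : (G.neighborSet (Fin.last m)).ncard = 1 := by rw [hdeg]; exact hlast
      obtain ⟨z, hz⟩ := Set.ncard_eq_one.mp h1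
      have hzlast : z ≠ Fin.last m := by
        have : z ∈ G.neighborSet (Fin.last m) := by rw [hz]; rfl
        exact (G.ne_of_adj this).symm
      obtain ⟨j, hj⟩ := Fin.exists_castSucc_eq.mpr hzlast
      have hnb : G.neighborSet (Fin.last m) = {j.castSucc} := by rw [hz, hj]
      have hGeq : extendG (restrictG G) j = G := extendG_restrictG hnb
      have hHT : (restrictG G).IsTree := restrictG_isTree hm hT h1
      have hHdeg : ∀ k, ((restrictG G).neighborSet k).ncard = d' j k := by
        intro k
        have h2 : ((extendG (restrictG G) j).neighborSet k.castSucc).ncard = d k.castSucc := by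
          rw [hGeq]; exact hdeg k.castSucc
        rw [extendG_ncard_castSucc] at h2
        by_cases hkj : k = j
        · simp only [hd', if_pos hkj]
          simp only [if_pos hkj] at h2
          omega
        · simp only [hd', if_neg hkj]
          simp only [if_neg hkj] at h2
          omega
      refine ⟨⟨j, restrictG G, hHT, hHdeg⟩, ?_⟩
      exact Subtype.ext hGeq
  letI : ∀ j : Fin m, Fintype (TT m (d' j)) := fun j => Fintype.ofFinite _
  rw [← Nat.card_congr (Equiv.ofBijective Φ hbij)]
  rw [Nat.card_eq_fintype_card, Fintype.card_sigma]
  exact Finset.sum_congr rfl fun j _ => (Nat.card_eq_fintype_card).symm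

end Count2
section Base

lemma small_acyclic (G : SimpleGraph (Fin 2)) : G.IsAcyclic := by
  intro v c hc
  have h1 : c.support.tail.Nodup := ((SimpleGraph.Walk.isCycle_def c).mp hc).2.2
  have h2 := h1.length_le_card
  have h3 : c.support.length = c.length + 1 := c.length_support
  have h4 := hc.three_le_length
  have h5 : c.support.tail.length = c.length := by
    rw [List.length_tail, h3]; omega
  simp only [Fintype.card_fin] at h2
  omega

lemma top_fin2_tree : (⊤ : SimpleGraph (Fin 2)).IsTree :=
  ⟨SimpleGraph.connected_top, small_acyclic _⟩

lemma top_fin2_nbr (k : Fin 2) : ((⊤ : SimpleGraph (Fin 2)).neighborSet k).ncard = 1 := by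
  have : (⊤ : SimpleGraph (Fin 2)).neighborSet k = {k + 1} := by
    ext x
    simp only [SimpleGraph.mem_neighborSet, SimpleGraph.top_adj, Set.mem_singleton_iff]
    fin_cases k <;> fin_cases x <;> decide
  rw [this, Set.ncard_singleton]

lemma fin2_tree_eq_top {G : SimpleGraph (Fin 2)} (hT : G.IsTree) : G = ⊤ := by
  have hadj : G.Adj 0 1 := by
    obtain ⟨p⟩ := hT.isConnected.preconnected (0 : Fin 2) 1
    have hnil : ¬ p.Nil := SimpleGraph.Walk.not_nil_of_ne (by decide)
    have h : G.Adj 0 (p.getVert 1) := p.adj_snd hnil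
    have hne : p.getVert 1 ≠ 0 := (G.ne_of_adj h).symm
    have : p.getVert 1 = 1 := by
      have hval : (p.getVert 1).val ≠ 0 := fun hv => hne (Fin.ext hv)
      have hlt := (p.getVert 1).isLt
      exact Fin.ext (by omega)
    rwa [this] at h
  ext x y
  simp only [SimpleGraph.top_adj]
  constructor
  · exact G.ne_of_adj
  · intro hxy
    fin_cases x <;> fin_cases y <;> first | exact absurd rfl hxy | exact hadj | exact hadj.symm

lemma card_fin2 (d : Fin 2 → ℕ) (hd : ∀ k, d k = 1) : Nat.card (TT 2 d) = 1 := by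
  haveI : Unique (TT 2 d) :=
    { default := ⟨⊤, top_fin2_tree, fun k => by rw [top_fin2_nbr, hd]⟩
      uniq := fun ⟨G, hT, _⟩ => Subtype.ext (fin2_tree_eq_top hT) }
  exact Nat.card_unique

end Base
section Main

lemma keystep (n : ℕ) (hn : 1 ≤ n)
    (IH : ∀ d : Fin (n+1) → ℕ, (∀ k, 1 ≤ d k) → (∑ k, d k = 2*n) →
      Nat.card (TT (n+1) d) * ∏ k, (d k - 1).factorial = (n-1).factorial)
    (d : Fin (n+2) → ℕ) (hd1 : ∀ k, 1 ≤ d k) (hsum : ∑ k, d k = 2*(n+1))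
    (hlast : d (Fin.last (n+1)) = 1) :
    Nat.card (TT (n+2) d) * ∏ k, (d k - 1).factorial = n.factorial := by
  classical
  set D : Fin (n+1) → ℕ := fun k => d k.castSucc with hD
  have hsumD : ∑ k, D k = 2*n + 1 := by
    have h := hsum
    rw [Fin.sum_univ_castSucc] at h
    have h' : ∑ k : Fin (n+1), d k.castSucc = ∑ k, D k := rfl
    rw [h'] at h
    omega
  have hj : ∀ j : Fin (n+1),
      Nat.card (TT (n+1) (fun k => if k = j then D k - 1 else D k)) *
        ∏ k, (D k - 1).factorial = (D j - 1) * (n-1).factorial := by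
    intro j
    by_cases h2 : 2 ≤ D j
    · have e2 : ∑ k, D k = D j + ∑ k ∈ Finset.univ.erase j, D k :=
        (Finset.add_sum_erase _ _ (Finset.mem_univ j)).symm
      have hIH := IH (fun k => if k = j then D k - 1 else D k)
        (fun k => by
          show 1 ≤ if k = j then D k - 1 else D k
          split_ifs with hkj
          · rw [hkj]; omega
          · exact hd1 _)
        (by
          have e1 : ∑ k, (if k = j then D k - 1 else D k)
              = (D j - 1) + ∑ k ∈ Finset.univ.erase j, D k := by
            rw [← Finset.add_sum_erase _ _ (Finset.mem_univ j), if_pos rfl]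
            congr 1
            exact Finset.sum_congr rfl fun k hk => if_neg (Finset.ne_of_mem_erase hk)
          show ∑ k, (if k = j then D k - 1 else D k) = 2*n
          rw [e1]
          omega)
      have p1 : ∏ k, (D k - 1).factorial
          = (D j - 1).factorial * ∏ k ∈ Finset.univ.erase j, (D k - 1).factorial :=
        (Finset.mul_prod_erase _ _ (Finset.mem_univ j)).symm
      have p2 : ∏ k, ((if k = j then D k - 1 else D k) - 1).factorial
          = (D j - 2).factorial * ∏ k ∈ Finset.univ.erase j, (D k - 1).factorial := by
        rw [← Finset.mul_prod_erase _ _ (Finset.mem_univ j), if_pos rfl]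
        have hx : D j - 1 - 1 = D j - 2 := by omega
        rw [hx]
        congr 1
        exact Finset.prod_congr rfl fun k hk => by
          rw [if_neg (Finset.ne_of_mem_erase hk)]
      have hfact : (D j - 1).factorial = (D j - 1) * (D j - 2).factorial := by
        have h3 : D j - 1 = (D j - 2) + 1 := by omega
        rw [h3, Nat.factorial_succ, ← h3]
      rw [p2] at hIH
      rw [p1, hfact]
      calc Nat.card (TT (n+1) fun k => if k = j then D k - 1 else D k) *
            ((D j - 1) * (D j - 2).factorial *
              ∏ k ∈ Finset.univ.erase j, (D k - 1).factorial)
          = (D j - 1) * (Nat.card (TT (n+1) fun k => if k = j then D k - 1 else D k) *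
            ((D j - 2).factorial * ∏ k ∈ Finset.univ.erase j, (D k - 1).factorial)) := by ring
        _ = (D j - 1) * (n-1).factorial := by rw [hIH]
    · have hDj : D j = 1 := by
        have h6 : D j = d j.castSucc := rfl
        have := hd1 j.castSucc
        omega
      haveI : IsEmpty (TT (n+1) (fun k => if k = j then D k - 1 else D k)) := by
        refine ⟨fun x => ?_⟩
        obtain ⟨H, hT, hdeg⟩ := x
        have hpos := tree_ncard_pos (by omega) hT j
        have h5 : (H.neighborSet j).ncard = D j - 1 := by simpa using hdeg j
        rw [h5, hDj] at hpos
        exact absurd hpos (by omega)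
      rw [Nat.card_of_isEmpty, Nat.zero_mul, hDj]
      simp
  have hdc := decomp_card (n+1) (by omega) d hd1 hlast
  have hTsum : Nat.card (TT (n+2) d) * ∏ k, (D k - 1).factorial = n * (n-1).factorial := by
    rw [hdc, Finset.sum_mul, Finset.sum_congr rfl (fun j _ => hj j), ← Finset.sum_mul]
    congr 1
    have h4 : ∑ j, (D j - 1) + (n+1) = ∑ j, D j := by
      have : ∑ j : Fin (n+1), ((D j - 1) + 1) = ∑ j, D j :=
        Finset.sum_congr rfl fun j _ => by have := hd1 j.castSucc; simp only [hD]; omega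
      rw [← this, Finset.sum_add_distrib]
      simp
    omega
  have hprod : ∏ k, (d k - 1).factorial = ∏ k, (D k - 1).factorial := by
    rw [Fin.prod_univ_castSucc (f := fun k => (d k - 1).factorial), hlast]
    simp [hD]
  rw [hprod, hTsum]
  exact Nat.mul_factorial_pred (by omega)

theorem cayley_deg (n : ℕ) (hn : 1 ≤ n) (dg : Fin (n + 1) → ℕ)
    (hdg : ∀ k, 1 ≤ dg k) (hsum : ∑ k, dg k = 2 * n) :
    Nat.card (TT (n+1) dg) * ∏ k, (dg k - 1).factorial = (n - 1).factorial := by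
  induction n with
  | zero => exact absurd hn (by omega)
  | succ n IH =>
    rcases Nat.eq_zero_or_pos n with rfl | hnpos
    · -- base case : two vertices
      have h2 : ∑ k, dg k = 2 := hsum
      rw [Fin.sum_univ_two] at h2
      have h0 := hdg 0
      have h1 := hdg 1
      have hd : ∀ k : Fin 2, dg k = 1 := Fin.forall_fin_two.mpr ⟨by omega, by omega⟩
      rw [card_fin2 dg hd, Fin.prod_univ_two, hd 0, hd 1]
      simp
    · -- inductive step
      have hex : ∃ l, dg l = 1 := by
        by_contra hcon
        push_neg at hcon
        have hge : ∀ k, 2 ≤ dg k := fun k => by have := hdg k; have := hcon k; omega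
        have : ∑ k : Fin (n+2), 2 ≤ ∑ k, dg k :=
          Finset.sum_le_sum fun k _ => hge k
        simp only [Finset.sum_const, Finset.card_univ, Fintype.card_fin, smul_eq_mul] at this
        omega
      obtain ⟨l, hl⟩ := hex
      set e := Equiv.swap l (Fin.last (n+1)) with he
      have hre := relabel_card (n+2) dg e
      have hkey := keystep n hnpos (fun d hd hs => IH (by omega) d hd hs) (dg ∘ ⇑e)
        (fun k => hdg (e k))
        (by rw [show ∑ k, (dg ∘ ⇑e) k = ∑ k, dg (e k) from rfl, Equiv.sum_comp e dg]; exact hsum)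
        (by simp only [Function.comp_apply, he, Equiv.swap_apply_right]; exact hl)
      rw [hre]
      have hprod : ∏ k, ((dg ∘ ⇑e) k - 1).factorial = ∏ k, (dg k - 1).factorial :=
        Equiv.prod_comp e (fun k => (dg k - 1).factorial) ▸ rfl
      rw [← hprod]
      rw [hkey]
      congr 1

end Main

theorem stmt6 (n : ℕ) (hn : 1 ≤ n) (dg : Fin (n + 1) → ℕ)
    (hdg : ∀ k, 1 ≤ dg k) (hsum : ∑ k, dg k = 2 * n) :
    Nat.card {G : SimpleGraph (Fin (n + 1)) //
        G.IsTree ∧ ∀ k, (G.neighborSet k).ncard = dg k} *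
      ∏ k, (dg k - 1).factorial = (n - 1).factorial :=
  cayley_deg n hn dg hdg hsum
end

section
/- For d ≥ 1 and n ≥ 1, the number of points x ∈ ℤ^d with ℓ¹-norm |x| = n satisfies s_d(n) ≤ 2^{2d−1}·e^{d−1}·n^{d−1}. -/
theorem stmt7 (d n : ℕ) (hd : 1 ≤ d) (hn : 1 ≤ n) :
    (Nat.card {x : Fin d → ℤ // (∑ i, (x i).natAbs) = n} : ℝ) ≤
      (2 : ℝ) ^ (2 * d - 1) * Real.exp 1 ^ (d - 1) * (n : ℝ) ^ (d - 1) := by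
  have hde : d + (d - 1) = 2 * d - 1 := by omega
  set i0 : Fin d := ⟨d - 1, by omega⟩ with hi0
  have key : Nat.card {x : Fin d → ℤ // (∑ i, (x i).natAbs) = n}
      ≤ 2 ^ d * (n + 1) ^ (d - 1) := by
    have hinj : Function.Injective
        (fun x : {x : Fin d → ℤ // (∑ i, (x i).natAbs) = n} =>
          ((fun i => decide (x.1 i < 0), fun i : {i : Fin d // i ≠ i0} =>
            (⟨(x.1 i.1).natAbs, by
              have hle : (x.1 i.1).natAbs ≤ ∑ j, (x.1 j).natAbs :=
                Finset.single_le_sum (f := fun j => (x.1 j).natAbs)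
                  (fun _ _ => Nat.zero_le _) (Finset.mem_univ i.1)
              rw [x.2] at hle
              omega⟩ : Fin (n+1))) :
            (Fin d → Bool) × ({i : Fin d // i ≠ i0} → Fin (n+1)))) := by
      rintro ⟨x, hx⟩ ⟨y, hy⟩ h
      simp only [Prod.mk.injEq] at h
      obtain ⟨h1, h2⟩ := h
      have hsign : ∀ i, (x i < 0 ↔ y i < 0) := fun i => by
        have := congrFun h1 i; simpa using this
      have habs : ∀ i, i ≠ i0 → (x i).natAbs = (y i).natAbs := fun i hi => by
        have := congrFun h2 ⟨i, hi⟩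
        simpa [Fin.ext_iff] using this
      have habs0 : (x i0).natAbs = (y i0).natAbs := by
        have hx' := hx; have hy' := hy
        rw [← Finset.add_sum_erase _ _ (Finset.mem_univ i0)] at hx' hy'
        have hrest : ∑ j ∈ Finset.univ.erase i0, (x j).natAbs
            = ∑ j ∈ Finset.univ.erase i0, (y j).natAbs :=
          Finset.sum_congr rfl fun j hj => habs j (Finset.ne_of_mem_erase hj)
        omega
      refine Subtype.ext (funext fun i => ?_)
      show x i = y i
      have ha : (x i).natAbs = (y i).natAbs := by
        by_cases hi : i = i0
        · subst hi; exact habs0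
        · exact habs i hi
      have hs := hsign i
      omega
    calc Nat.card {x : Fin d → ℤ // (∑ i, (x i).natAbs) = n}
        ≤ Nat.card ((Fin d → Bool) × ({i : Fin d // i ≠ i0} → Fin (n+1))) :=
          Nat.card_le_card_of_injective _ hinj
      _ = 2 ^ d * (n + 1) ^ (d - 1) := by
          have hc : Fintype.card {i : Fin d // i ≠ i0} = d - 1 := by
            simp [Fintype.card_subtype_compl]
          rw [Nat.card_eq_fintype_card, Fintype.card_prod, Fintype.card_fun,
            Fintype.card_fun, Fintype.card_bool, Fintype.card_fin,
            Fintype.card_fin, hc]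
  have hcast : (Nat.card {x : Fin d → ℤ // (∑ i, (x i).natAbs) = n} : ℝ)
      ≤ (2 : ℝ) ^ d * ((n : ℝ) + 1) ^ (d - 1) := by
    calc (Nat.card {x : Fin d → ℤ // (∑ i, (x i).natAbs) = n} : ℝ)
        ≤ ((2 ^ d * (n + 1) ^ (d - 1) : ℕ) : ℝ) := by exact_mod_cast key
      _ = (2 : ℝ) ^ d * ((n : ℝ) + 1) ^ (d - 1) := by push_cast; ring
  refine hcast.trans ?_
  have hn1 : (1 : ℝ) ≤ (n : ℝ) := by exact_mod_cast hn
  have h2 : (2 : ℝ) ^ d * ((n : ℝ) + 1) ^ (d - 1)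
      ≤ (2 : ℝ) ^ d * (2 * (n : ℝ)) ^ (d - 1) := by
    have h1 : ((n:ℝ)+1) ^ (d-1) ≤ (2*(n:ℝ)) ^ (d-1) :=
      pow_le_pow_left₀ (by linarith) (by linarith) _
    have h0 : (0:ℝ) ≤ (2:ℝ) ^ d := by positivity
    nlinarith [h1, h0]
  refine h2.trans ?_
  have heq : (2 : ℝ) ^ d * (2 * (n : ℝ)) ^ (d - 1)
      = (2 : ℝ) ^ (2 * d - 1) * (n : ℝ) ^ (d - 1) := by
    rw [mul_pow, ← mul_assoc, ← pow_add, hde]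
  rw [heq]
  have he : (1 : ℝ) ≤ Real.exp 1 ^ (d - 1) :=
    one_le_pow₀ (Real.one_le_exp zero_le_one)
  calc (2 : ℝ) ^ (2 * d - 1) * (n : ℝ) ^ (d - 1)
      = (2 : ℝ) ^ (2 * d - 1) * 1 * (n : ℝ) ^ (d - 1) := by ring
    _ ≤ (2 : ℝ) ^ (2 * d - 1) * Real.exp 1 ^ (d - 1) * (n : ℝ) ^ (d - 1) := by
        gcongr
end
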